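/- Let p ≥ 1, let Λ ⊂ ℤ² be finite with boundary condition φ, let γ be a contour with Λ_γ ⊆ Λ, let h ∈ ℤ, and let η ∈ ℤ^Λ satisfy the h-contour event C_{γ,h}. Define T_γη by (T_γη)_v = η_v − 1 for v ∈ Λ_γ and (T_γη)_v = η_v otherwise. Then H^{p,φ}_Λ(T_γη) ≤ H^{p,φ}_Λ(η) − |γ|. -/

import Mathlib

/-!
Lowering `ξ` by one on `Λ_γ` only changes the terms of the Hamiltonian on bonds of `γ`, i.e. on
edges with exactly one endpoint in `Λ_γ`. On such a bond the contour event makes the height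
difference `d` across the bond (inside minus outside) at least `1`, and lowering replaces it by
`d - 1`. Superadditivity of `t ↦ t ^ p` for `p ≥ 1` gives `(d - 1) ^ p + 1 ≤ d ^ p`, so each of
the `|γ|` bonds lowers the energy by at least `1`.
-/

open scoped BigOperators Classical

noncomputable section

namespace PSOS

/-- Sites of the square lattice `ℤ²`. -/
abbrev Site : Type := ℤ × ℤ

/-- The nearest-neighbour edges incident to `x`, each written in its normalized
(right/up oriented) form, so that every unordered pair appears in a unique way. -/
def edgesAt (x : Site) : Finset (Site × Site) :=
  {(x, (x.1 + 1, x.2)), (x, (x.1, x.2 + 1)),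
   ((x.1 - 1, x.2), x), ((x.1, x.2 - 1), x)}

/-- Nearest-neighbour edges of `ℤ²` with at least one endpoint in `Λ`,
each unordered pair appearing exactly once. -/
def edges (Λ : Finset Site) : Finset (Site × Site) := Λ.biUnion edgesAt

/-- Extension `ξ` of a configuration `η : Λ → ℤ` by the boundary condition `φ` off `Λ`. -/
def extend (Λ : Finset Site) (φ : Site → ℤ) (η : Λ → ℤ) : Site → ℤ :=
  fun x => if h : x ∈ Λ then η ⟨x, h⟩ else φ x

/-- The `p`-SOS Hamiltonian `H^{p,φ}_Λ` on `Λ` with boundary condition `φ`. -/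
def ham (p : ℝ) (Λ : Finset Site) (φ : Site → ℤ) (η : Λ → ℤ) : ℝ :=
  ∑ e ∈ edges Λ, (|extend Λ φ η e.1 - extend Λ φ η e.2| : ℝ) ^ p

/-- Boltzmann weight `exp(-β H^{p,φ}_Λ(η))`. -/
def weight (p β : ℝ) (Λ : Finset Site) (φ : Site → ℤ) (η : Λ → ℤ) : ℝ :=
  Real.exp (-β * ham p Λ φ η)

/-- Finite-volume Gibbs probability `hatπ^{p,φ}_Λ(A)` of an event `A ⊆ ℤ^Λ`. -/
def gibbs (p β : ℝ) (Λ : Finset Site) (φ : Site → ℤ) (A : Set (Λ → ℤ)) : ℝ :=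
  (∑' η : A, weight p β Λ φ η) / (∑' η : (Λ → ℤ), weight p β Λ φ η)

/-- Gibbs expectation of an observable under `hatπ^{p,φ}_Λ`. -/
def gibbsExp (p β : ℝ) (Λ : Finset Site) (φ : Site → ℤ) (f : (Λ → ℤ) → ℝ) : ℝ :=
  (∑' η : (Λ → ℤ), f η * weight p β Λ φ η) / (∑' η : (Λ → ℤ), weight p β Λ φ η)

/-- The floor event `{η : η_x ≥ 0 for all x ∈ Λ}`. -/
def floorSet (Λ : Finset Site) : Set (Λ → ℤ) := {η | ∀ x, 0 ≤ η x}

/-- The event `{η : 0 ≤ η_x ≤ n for all x ∈ Λ}` (floor at `0`, ceiling at `n`). -/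
def boxSet (Λ : Finset Site) (n : ℕ) : Set (Λ → ℤ) :=
  {η | ∀ x, 0 ≤ η x ∧ η x ≤ (n : ℤ)}

/-- `barπ^{p,0}_Λ`: the Gibbs measure with zero boundary condition conditioned
on the floor event. -/
def barGibbs (p β : ℝ) (Λ : Finset Site) (A : Set (Λ → ℤ)) : ℝ :=
  gibbs p β Λ 0 (A ∩ floorSet Λ) / gibbs p β Λ 0 (floorSet Λ)

/-- `π^{p,0}_Λ`: the Gibbs measure with zero boundary condition conditioned on
having floor at `0` and ceiling at `n`. -/
def ceilGibbs (p β : ℝ) (Λ : Finset Site) (n : ℕ) (A : Set (Λ → ℤ)) : ℝ :=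
  gibbs p β Λ 0 (A ∩ boxSet Λ n) / gibbs p β Λ 0 (boxSet Λ n)

/-- The nearest-neighbour graph on `ℤ²`. -/
def nbrGraph : SimpleGraph Site where
  Adj x y := (x.1 - y.1).natAbs + (x.2 - y.2).natAbs = 1
  symm := by constructor; intro x y hxy; (try simp only at hxy ⊢); omega
  loopless := by constructor; intro x h; (try simp only at h); omega

/-- The four nearest neighbours of a site. -/
def nbrs (x : Site) : Finset Site :=
  {(x.1 + 1, x.2), (x.1 - 1, x.2), (x.1, x.2 + 1), (x.1, x.2 - 1)}

/-- A contour `γ` of the dual lattice `(ℤ²)*`, identified with the finite region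
`Λ_γ ⊆ ℤ²` of sites it encloses: the region is nonempty and connected with
connected complement, so that its edge boundary is a single closed dual circuit
(consistently with the standard linking rule at dual vertices). -/
structure Contour where
  interior : Finset Site
  nonempty : interior.Nonempty
  conn : (nbrGraph.induce (interior : Set Site)).Connected
  coconn : (nbrGraph.induce ((interior : Set Site)ᶜ)).Connected

/-- The nearest-neighbour edges crossing the boundary of `S`, oriented from
inside to outside; these correspond to the bonds of the dual circuit bounding `S`. -/
def bdryEdges (S : Finset Site) : Finset (Site × Site) :=
  S.biUnion fun x => ((nbrs x).filter fun y => y ∉ S).image fun y => (x, y)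

/-- `|γ|`: the number of bonds of the contour `γ`. -/
def Contour.len (γ : Contour) : ℕ := (bdryEdges γ.interior).card

/-- `∂⁺_γ`: sites of the interior adjacent to the exterior. -/
def innerBdry (S : Finset Site) : Finset Site :=
  S.filter fun x => ∃ y ∈ nbrs x, y ∉ S

/-- `∂⁻_γ`: sites of the exterior adjacent to the interior. -/
def outerBdry (S : Finset Site) : Finset Site :=
  (S.biUnion nbrs).filter fun y => y ∉ S

/-- The event `C_{γ,h}` that `γ` is an `h`-contour: the extended configuration `ξ`
is at least `h` on `∂⁺_γ` and at most `h - 1` on `∂⁻_γ`. -/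
def contourEvent (Λ : Finset Site) (φ : Site → ℤ) (γ : Contour) (h : ℤ) :
    Set (Λ → ℤ) :=
  {η | (∀ x ∈ innerBdry γ.interior, h ≤ extend Λ φ η x) ∧
       (∀ y ∈ outerBdry γ.interior, extend Λ φ η y ≤ h - 1)}

/-- The map `T_γ` lowering the configuration by `1` inside the contour `γ`. -/
def lower (Λ : Finset Site) (γ : Contour) (η : Λ → ℤ) : Λ → ℤ :=
  fun x => if (x : Site) ∈ γ.interior then η x - 1 else η x

/-- An event is increasing if it is upward closed for the pointwise order. -/
def IncrEvent (Λ : Finset Site) (E : Set (Λ → ℤ)) : Prop :=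
  ∀ η η' : Λ → ℤ, (∀ x, η x ≤ η' x) → η ∈ E → η' ∈ E

section Lowering

variable {α : Type*} [DecidableEq α]

def lowerOn (S : Finset α) (ξ : α → ℤ) (x : α) : ℤ := ξ x - if x ∈ S then 1 else 0

lemma sub_one_rpow_le_rpow_sub_one {p : ℝ} (hp : 1 ≤ p) {d : ℝ} (hd : 1 ≤ d) :
    (d - 1) ^ p ≤ d ^ p - 1 := by
  have h := Real.add_rpow_le_rpow_add (sub_nonneg.2 hd) zero_le_one hp
  rw [Real.one_rpow, sub_add_cancel] at h
  linarith

lemma rpow_abs_sub_one_sub_le {p : ℝ} (hp : 1 ≤ p) {a b : ℤ} (hab : b < a) :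
    |(a : ℝ) - 1 - b| ^ p ≤ |(a : ℝ) - b| ^ p - 1 := by
  have hd : (1 : ℝ) ≤ a - b := by exact_mod_cast Int.sub_pos_of_lt hab
  rw [sub_right_comm, abs_of_nonneg (by linarith), abs_of_nonneg (by linarith)]
  exact sub_one_rpow_le_rpow_sub_one hp hd

lemma rpow_abs_sub_lowerOn_le {p : ℝ} (hp : 1 ≤ p) (S : Finset α) (ξ : α → ℤ) {x y : α}
    (hxy : x ∈ S → y ∉ S → ξ y < ξ x) (hyx : y ∈ S → x ∉ S → ξ x < ξ y) :
    (|lowerOn S ξ x - lowerOn S ξ y| : ℝ) ^ p ≤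
      (|ξ x - ξ y| : ℝ) ^ p - if Xor (x ∈ S) (y ∈ S) then 1 else 0 := by
  by_cases hx : x ∈ S <;> by_cases hy : y ∈ S <;>
    simp only [lowerOn, hx, hy, if_true, if_false, xor_self, xor_true, xor_false,
      not_false_eq_true, id_eq, sub_zero, Int.cast_sub, Int.cast_one, sub_sub_sub_cancel_right,
      le_refl]
  · exact rpow_abs_sub_one_sub_le hp (hxy hx hy)
  · rw [abs_sub_comm, abs_sub_comm (ξ x : ℝ)]
    exact rpow_abs_sub_one_sub_le hp (hyx hy hx)

lemma sum_rpow_abs_sub_lowerOn_le {p : ℝ} (hp : 1 ≤ p) (E : Finset (α × α)) (S : Finset α)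
    (ξ : α → ℤ) (hstep : ∀ x ∈ S, ∀ y ∉ S, (x, y) ∈ E ∨ (y, x) ∈ E → ξ y < ξ x) :
    ∑ e ∈ E, (|lowerOn S ξ e.1 - lowerOn S ξ e.2| : ℝ) ^ p ≤
      ∑ e ∈ E, (|ξ e.1 - ξ e.2| : ℝ) ^ p - (E.filter fun e => Xor (e.1 ∈ S) (e.2 ∈ S)).card := by
  calc _ ≤ ∑ e ∈ E, ((|ξ e.1 - ξ e.2| : ℝ) ^ p - if Xor (e.1 ∈ S) (e.2 ∈ S) then 1 else 0) :=
        Finset.sum_le_sum fun e he => rpow_abs_sub_lowerOn_le hp S ξ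
          (fun h1 h2 => hstep _ h1 _ h2 (.inl he)) (fun h2 h1 => hstep _ h2 _ h1 (.inr he))
    _ = _ := by rw [Finset.sum_sub_distrib, Finset.sum_boole]

end Lowering

def IsForward (e : Site × Site) : Prop :=
  e.2 = (e.1.1 + 1, e.1.2) ∨ e.2 = (e.1.1, e.1.2 + 1)

lemma mem_edges_iff {Λ : Finset Site} {e : Site × Site} :
    e ∈ edges Λ ↔ (e.1 ∈ Λ ∨ e.2 ∈ Λ) ∧ IsForward e := by
  obtain ⟨⟨a, b⟩, c, d⟩ := e
  simp only [edges, edgesAt, IsForward, Finset.mem_biUnion, Finset.mem_insert,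
    Finset.mem_singleton, Prod.ext_iff, Prod.exists]
  constructor
  · rintro ⟨u, v, hΛ, he⟩
    rcases he with ⟨⟨rfl, rfl⟩, rfl, rfl⟩ | ⟨⟨rfl, rfl⟩, rfl, rfl⟩ | ⟨⟨rfl, rfl⟩, rfl, rfl⟩ |
      ⟨⟨rfl, rfl⟩, rfl, rfl⟩ <;> simp_all
  · rintro ⟨hΛ | hΛ, he⟩
    · exact ⟨a, b, hΛ, by omega⟩
    · exact ⟨c, d, hΛ, by omega⟩

lemma mem_nbrs_iff {x y : Site} :
    y ∈ nbrs x ↔ y = (x.1 + 1, x.2) ∨ y = (x.1 - 1, x.2) ∨ y = (x.1, x.2 + 1) ∨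
      y = (x.1, x.2 - 1) := by
  simp [nbrs]

lemma IsForward.mem_nbrs {e : Site × Site} (h : IsForward e) :
    e.2 ∈ nbrs e.1 ∧ e.1 ∈ nbrs e.2 := by
  obtain ⟨⟨a, b⟩, c, d⟩ := e
  simp only [IsForward, Prod.ext_iff] at h
  simp only [mem_nbrs_iff, Prod.ext_iff]
  omega

lemma IsForward.not_swap {e : Site × Site} (h : IsForward e) : ¬IsForward e.swap := by
  obtain ⟨⟨a, b⟩, c, d⟩ := e
  simp only [IsForward, Prod.swap, Prod.ext_iff] at *
  omega

lemma isForward_swap_of_mem_nbrs {e : Site × Site} (hadj : e.2 ∈ nbrs e.1)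
    (h : ¬IsForward e) : IsForward e.swap := by
  obtain ⟨⟨a, b⟩, c, d⟩ := e
  simp only [mem_nbrs_iff, IsForward, Prod.swap, Prod.ext_iff] at *
  omega

lemma mem_bdryEdges_iff {S : Finset Site} {e : Site × Site} :
    e ∈ bdryEdges S ↔ e.1 ∈ S ∧ e.2 ∈ nbrs e.1 ∧ e.2 ∉ S := by
  simp only [bdryEdges, Finset.mem_biUnion, Finset.mem_image, Finset.mem_filter]
  constructor
  · rintro ⟨x, hx, y, ⟨hy, hyS⟩, rfl⟩
    exact ⟨hx, hy, hyS⟩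
  · rintro ⟨h1, h2, h3⟩
    exact ⟨e.1, h1, e.2, ⟨h2, h3⟩, rfl⟩

/-- Orienting each edge of `bdryEdges S` forward is a bijection onto the crossing edges. -/
lemma card_bdryEdges {S Λ : Finset Site} (hS : S ⊆ Λ) :
    (bdryEdges S).card = ((edges Λ).filter fun e => Xor (e.1 ∈ S) (e.2 ∈ S)).card := by
  refine Finset.card_nbij' (fun e => if IsForward e then e else e.swap)
    (fun e => if e.1 ∈ S then e else e.swap) ?_ ?_ ?_ ?_
  · intro e he
    obtain ⟨h1, h2, h3⟩ := mem_bdryEdges_iff.1 he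
    by_cases hf : IsForward e
    · simp only [if_pos hf, Finset.mem_coe, Finset.mem_filter]
      exact ⟨mem_edges_iff.2 ⟨.inl (hS h1), hf⟩, .inl ⟨h1, h3⟩⟩
    · simp only [if_neg hf, Finset.mem_coe, Finset.mem_filter]
      exact ⟨mem_edges_iff.2 ⟨.inr (hS h1), isForward_swap_of_mem_nbrs h2 hf⟩, .inr ⟨h1, h3⟩⟩
  · intro e he
    obtain ⟨he, hx⟩ := Finset.mem_filter.1 he
    obtain ⟨hadj, hadj'⟩ := (mem_edges_iff.1 he).2.mem_nbrs
    rcases hx with ⟨h1, h2⟩ | ⟨h2, h1⟩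
    · simp [h1, h2, hadj, mem_bdryEdges_iff]
    · simp [h1, h2, hadj', mem_bdryEdges_iff]
  · intro e he
    obtain ⟨h1, -, h3⟩ := mem_bdryEdges_iff.1 he
    by_cases hf : IsForward e <;> simp [hf, h1, h3]
  · intro e he
    have hf := (mem_edges_iff.1 (Finset.mem_filter.1 he).1).2
    by_cases h1 : e.1 ∈ S <;> simp [h1, hf, hf.not_swap]

lemma extend_lower {Λ : Finset Site} (φ : Site → ℤ) {γ : Contour} (hγ : γ.interior ⊆ Λ)
    (η : Λ → ℤ) : extend Λ φ (lower Λ γ η) = lowerOn γ.interior (extend Λ φ η) := by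
  ext x
  by_cases hx : x ∈ Λ
  · by_cases hxγ : x ∈ γ.interior <;> simp [extend, lower, lowerOn, hx, hxγ]
  · have hxγ : x ∉ γ.interior := fun h => hx (hγ h)
    simp [extend, lowerOn, hx, hxγ]

lemma extend_lt_of_mem_contourEvent {Λ : Finset Site} {φ : Site → ℤ} {γ : Contour} {h : ℤ}
    {η : Λ → ℤ} (hη : η ∈ contourEvent Λ φ γ h) {x y : Site} (hx : x ∈ γ.interior)
    (hy : y ∉ γ.interior) (hxy : y ∈ nbrs x) : extend Λ φ η y < extend Λ φ η x := by
  have hin := hη.1 x (Finset.mem_filter.2 ⟨hx, y, hxy, hy⟩)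
  have hout := hη.2 y (Finset.mem_filter.2 ⟨Finset.mem_biUnion.2 ⟨x, hx, hxy⟩, hy⟩)
  omega

/-- if `γ` is an `h`-contour of `η` (with `Λ_γ ⊆ Λ`), then lowering
the configuration by `1` inside `γ` decreases the Hamiltonian by at least `|γ|`:
`H^{p,φ}_Λ(T_γ η) ≤ H^{p,φ}_Λ(η) - |γ|`. -/
theorem statement_3 (p : ℝ) (hp : 1 ≤ p) (Λ : Finset Site) (φ : Site → ℤ)
    (γ : Contour) (hγ : γ.interior ⊆ Λ) (h : ℤ) (η : Λ → ℤ)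
    (hη : η ∈ contourEvent Λ φ γ h) :
    ham p Λ φ (lower Λ γ η) ≤ ham p Λ φ η - (γ.len : ℝ) := by
  have hstep : ∀ x ∈ γ.interior, ∀ y ∉ γ.interior, (x, y) ∈ edges Λ ∨ (y, x) ∈ edges Λ →
      extend Λ φ η y < extend Λ φ η x := by
    rintro x hx y hy (hxy | hyx)
    · exact extend_lt_of_mem_contourEvent hη hx hy (mem_edges_iff.1 hxy).2.mem_nbrs.1
    · exact extend_lt_of_mem_contourEvent hη hx hy (mem_edges_iff.1 hyx).2.mem_nbrs.2
  rw [ham, ham, extend_lower φ hγ, Contour.len, card_bdryEdges hγ]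
  exact sum_rpow_abs_sub_lowerOn_le hp _ _ _ hstep

end PSOS
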